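/- arXiv:1705.00133 — 6 statements merged into one kernel-verified Lean document; each statement's English description precedes it below -/
import Mathlib

section
/- (Approximate Strassen theorem, finite case.) Let A, B be finite sets, μ₁ ∈ SubDist(A), μ₂ ∈ SubDist(B), R ⊆ A × B, and ε, δ ≥ 0. If for every X ⊆ A we have μ₁[X] ≤ e^ε · μ₂[R(X)] + δ, where R(X) = {b ∈ B : ∃a ∈ X, (a,b) ∈ R}, then there exists an (ε,δ)-approximate ⋆-lifting of μ₁ and μ₂ for R. -/
open scoped ENNReal

noncomputable section

def mass {A : Type*} (μ : A → ℝ≥0∞) (X : Set A) : ℝ≥0∞ := ∑' x : X, μ x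

def SubDist {A : Type*} (μ : A → ℝ≥0∞) : Prop := mass μ Set.univ ≤ 1

def dpDiv {B : Type*} (ε : ℝ) (μ ν : B → ℝ≥0∞) : ℝ≥0∞ :=
  ⨆ E : Set B, (mass μ E - ENNReal.ofReal (Real.exp ε) * mass ν E)

def relImage {A B : Type*} (R : A → B → Prop) (X : Set A) : Set B :=
  {b | ∃ a ∈ X, R a b}

def extL {A B : Type*} (η : A × Option B → ℝ≥0∞) : Option A × Option B → ℝ≥0∞ :=
  fun p => p.1.elim 0 (fun a => η (a, p.2))

def extR {A B : Type*} (η : Option A × B → ℝ≥0∞) : Option A × Option B → ℝ≥0∞ :=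
  fun p => p.2.elim 0 (fun b => η (p.1, b))

/-- The conditions for a pair `(ηL, ηR)` to witness an `(ε,δ)`-approximate ⋆-lifting
of `μ₁` and `μ₂` for the relation `R`.  Here `⋆` is represented by `none`. -/
def IsStarWitness {A B : Type*} (ε δ : ℝ) (μ₁ : A → ℝ≥0∞) (μ₂ : B → ℝ≥0∞)
    (R : A → B → Prop) (ηL : A × Option B → ℝ≥0∞) (ηR : Option A × B → ℝ≥0∞) : Prop :=
  SubDist ηL ∧ SubDist ηR ∧
  (∀ a, (∑' b : Option B, ηL (a, b)) = μ₁ a) ∧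
  (∀ b, (∑' a : Option A, ηR (a, b)) = μ₂ b) ∧
  (∀ a b, ηL (a, some b) ≠ 0 → R a b) ∧
  (∀ a b, ηR (some a, b) ≠ 0 → R a b) ∧
  dpDiv ε (extL ηL) (extR ηR) ≤ ENNReal.ofReal δ

/-- Existence of an `(ε,δ)`-approximate ⋆-lifting. -/
def StarLift {A B : Type*} (ε δ : ℝ) (μ₁ : A → ℝ≥0∞) (μ₂ : B → ℝ≥0∞)
    (R : A → B → Prop) : Prop :=
  ∃ ηL ηR, IsStarWitness ε δ μ₁ μ₂ R ηL ηR

/-!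
Scale `μ₂` by `e^ε` and read the problem as a bipartite network
source → `A` → `B` → sink, with capacities `μ₁` and `e^ε μ₂` on the outer edges and the edges
of `R` in between. A maximum flow exists by compactness, and the vertices of `A` reachable from
the source in its residual network form a set `X` whose cut has exactly the value of the flow
(max-flow/min-cut). The hypothesis at `X` then says that the flow leaves at most `δ` of `μ₁`
unmatched. The lifting carries the flow on `A × B`, in `η_L` as it is and in `η_R` divided
by `e^ε`, and sends the unmatched mass to `⋆`; so `η̄_L ≤ e^ε η̄_R` except on `A × {⋆}`, where
`η̄_L` has mass at most `δ`.
-/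

section Flow

variable {A B : Type*}

def singleEdge [DecidableEq A] [DecidableEq B] (a : A) (b : B) (s : ℝ) : A → B → ℝ :=
  fun x y => if x = a ∧ y = b then s else 0

theorem sum_singleEdge_row [DecidableEq A] [DecidableEq B] [Fintype B] (a x : A) (b : B)
    (s : ℝ) : ∑ y, singleEdge a b s x y = if x = a then s else 0 := by
  simp [singleEdge, ite_and]

theorem sum_singleEdge_col [DecidableEq A] [DecidableEq B] [Fintype A] (a : A) (b y : B)
    (s : ℝ) : ∑ x, singleEdge a b s x y = if y = b then s else 0 := by
  simp [singleEdge, ite_and, Finset.sum_ite_eq']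

variable [Fintype A] [Fintype B]

/-- A flow through the network source → `A` → `B` → sink, with capacities `ν₁` on the edges
out of the source, `ν₂` on the edges into the sink, and the edges of `R` in between. -/
structure IsFlow (R : A → B → Prop) (ν₁ : A → ℝ) (ν₂ : B → ℝ) (γ : A → B → ℝ) : Prop where
  nonneg : ∀ a b, 0 ≤ γ a b
  rel : ∀ a b, γ a b ≠ 0 → R a b
  row_le : ∀ a, ∑ b, γ a b ≤ ν₁ a
  col_le : ∀ b, ∑ a, γ a b ≤ ν₂ b

variable {R : A → B → Prop} {ν₁ : A → ℝ} {ν₂ : B → ℝ} {γ : A → B → ℝ}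

theorem IsFlow.apply_le (hγ : IsFlow R ν₁ ν₂ γ) (a : A) (b : B) : γ a b ≤ ν₁ a :=
  (Finset.single_le_sum (fun b _ => hγ.nonneg a b) (Finset.mem_univ b)).trans (hγ.row_le a)

theorem isClosed_setOf_isFlow : IsClosed {γ | IsFlow R ν₁ ν₂ γ} := by
  have : {γ | IsFlow R ν₁ ν₂ γ} =
      (⋂ a, ⋂ b, {γ : A → B → ℝ | 0 ≤ γ a b}) ∩ (⋂ a, ⋂ b, ⋂ (_ : ¬ R a b), {γ | γ a b = 0}) ∩
        (⋂ a, {γ | ∑ b, γ a b ≤ ν₁ a}) ∩ ⋂ b, {γ | ∑ a, γ a b ≤ ν₂ b} := by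
    ext γ
    simp only [Set.mem_ofPred_eq, Set.mem_inter_iff, Set.mem_iInter]
    exact ⟨fun h => ⟨⟨⟨h.nonneg, fun a b hR => not_not.1 (mt (h.rel a b) hR)⟩, h.row_le⟩,
        h.col_le⟩,
      fun ⟨⟨⟨h₀, hR⟩, hrow⟩, hcol⟩ => ⟨h₀, fun a b => not_imp_comm.1 (hR a b), hrow, hcol⟩⟩
  rw [this]
  refine ((isClosed_iInter fun a => isClosed_iInter fun b => ?_).inter
    (isClosed_iInter fun a => isClosed_iInter fun b => isClosed_iInter fun _ => ?_)).inter
    (isClosed_iInter fun a => ?_) |>.inter (isClosed_iInter fun b => ?_)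
  · exact isClosed_le continuous_const (by fun_prop)
  · exact isClosed_eq (by fun_prop) continuous_const
  · exact isClosed_le (by fun_prop) continuous_const
  · exact isClosed_le (by fun_prop) continuous_const

theorem exists_max_isFlow (h₁ : ∀ a, 0 ≤ ν₁ a) (h₂ : ∀ b, 0 ≤ ν₂ b) :
    ∃ γ, IsFlow R ν₁ ν₂ γ ∧
      ∀ γ', IsFlow R ν₁ ν₂ γ' → ∑ a, ∑ b, γ' a b ≤ ∑ a, ∑ b, γ a b := by
  have hzero : IsFlow R ν₁ ν₂ 0 :=
    ⟨fun _ _ => le_rfl, fun _ _ h => absurd rfl h, by simpa using h₁, by simpa using h₂⟩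
  have hcpt : IsCompact {γ | IsFlow R ν₁ ν₂ γ} :=
    (isCompact_univ_pi fun a => isCompact_univ_pi fun _ => isCompact_Icc (a := 0) (b := ν₁ a)
      ).of_isClosed_subset isClosed_setOf_isFlow
        fun γ hγ a _ b _ => ⟨hγ.nonneg a b, hγ.apply_le a b⟩
  obtain ⟨γ, hγ, hmax⟩ := hcpt.exists_isMaxOn ⟨0, hzero⟩
    (f := fun γ => ∑ a, ∑ b, γ a b) (by fun_prop)
  exact ⟨γ, hγ, fun γ' hγ' => hmax hγ'⟩

theorem IsFlow.exists_slack_transfer {a a' : A} {b : B} (hγ : IsFlow R ν₁ ν₂ γ)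
    (ha : ∑ y, γ a y < ν₁ a) (hab : R a b) (ha'b : 0 < γ a' b) :
    ∃ γ', IsFlow R ν₁ ν₂ γ' ∧ (∀ y, ∑ x, γ' x y = ∑ x, γ x y) ∧ ∑ y, γ' a' y < ν₁ a' ∧
      ∀ x y, 0 < γ x y → 0 < γ' x y := by
  classical
  set s := min (ν₁ a - ∑ y, γ a y) (γ a' b) / 2
  have hs : 0 < s := by positivity
  have hsa : s < ν₁ a - ∑ y, γ a y := by grind
  have hsb : s < γ a' b := by grind
  set γ' := γ + singleEdge a b s - singleEdge a' b s
  have hentry : ∀ x y, γ' x y = γ x y + (if x = a ∧ y = b then s else 0) -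
      if x = a' ∧ y = b then s else 0 := fun x y => rfl
  have hrow : ∀ x, ∑ y, γ' x y = ∑ y, γ x y + (if x = a then s else 0) -
      if x = a' then s else 0 := by
    intro x
    simp [γ', Finset.sum_add_distrib, Finset.sum_sub_distrib, sum_singleEdge_row]
  have hcol : ∀ y, ∑ x, γ' x y = ∑ x, γ x y := by
    intro y
    simp [γ', Finset.sum_add_distrib, Finset.sum_sub_distrib, sum_singleEdge_col]
  have hlower : ∀ x y, 0 < γ x y → 0 < γ' x y := by
    intro x y hxy
    rw [hentry]
    split_ifs with h h' h' <;> grind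
  refine ⟨γ', ⟨fun x y => ?_, fun x y hxy => ?_, fun x => ?_, fun y => ?_⟩, hcol, ?_, hlower⟩
  · rw [hentry]; have := hγ.nonneg x y; split_ifs <;> grind
  · by_cases hx : x = a ∧ y = b
    · grind
    · by_cases hx' : x = a' ∧ y = b
      · grind [hγ.rel a' b ha'b.ne']
      · exact hγ.rel x y (by simpa [hentry, hx, hx'] using hxy)
  · rw [hrow]; have := hγ.row_le x; split_ifs <;> grind
  · rw [hcol]; exact hγ.col_le y
  · rw [hrow]; have := hγ.row_le a'; split_ifs <;> grind

theorem IsFlow.exists_augment {a : A} {b : B} (hγ : IsFlow R ν₁ ν₂ γ)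
    (ha : ∑ y, γ a y < ν₁ a) (hab : R a b) (hb : ∑ x, γ x b < ν₂ b) :
    ∃ γ', IsFlow R ν₁ ν₂ γ' ∧ ∑ x, ∑ y, γ x y < ∑ x, ∑ y, γ' x y := by
  classical
  set s := min (ν₁ a - ∑ y, γ a y) (ν₂ b - ∑ x, γ x b)
  have hs : 0 < s := by positivity
  set γ' := γ + singleEdge a b s
  have hrow : ∀ x, ∑ y, γ' x y = ∑ y, γ x y + if x = a then s else 0 := by
    intro x
    simp [γ', Finset.sum_add_distrib, sum_singleEdge_row]
  have hcol : ∀ y, ∑ x, γ' x y = ∑ x, γ x y + if y = b then s else 0 := by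
    intro y
    simp [γ', Finset.sum_add_distrib, sum_singleEdge_col]
  refine ⟨γ', ⟨fun x y => ?_, fun x y hxy => ?_, fun x => ?_, fun y => ?_⟩, ?_⟩
  · have := hγ.nonneg x y
    simp only [γ', Pi.add_apply, singleEdge]; split_ifs <;> linarith
  · by_cases hx : x = a ∧ y = b
    · grind
    · exact hγ.rel x y (by simpa [γ', singleEdge, hx] using hxy)
  · rw [hrow]; have := hγ.row_le x; split_ifs <;> grind
  · rw [hcol]; have := hγ.col_le y; split_ifs <;> grind
  · simp only [hrow, Finset.sum_add_distrib, Finset.sum_ite_eq', Finset.mem_univ, if_true]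
    linarith

/-- The vertices of `A` reachable from the source in the residual network of `γ`. -/
def residualReach (R : A → B → Prop) (ν₁ : A → ℝ) (γ : A → B → ℝ) : Set A :=
  {a | ∃ a₀, ∑ y, γ a₀ y < ν₁ a₀ ∧
    Relation.ReflTransGen (fun x x' => ∃ y, R x y ∧ 0 < γ x' y) a₀ a}

theorem IsFlow.exists_slack_of_mem_residualReach {a : A} (hγ : IsFlow R ν₁ ν₂ γ)
    (ha : a ∈ residualReach R ν₁ γ) :
    ∃ γ', IsFlow R ν₁ ν₂ γ' ∧ (∀ y, ∑ x, γ' x y = ∑ x, γ x y) ∧ ∑ y, γ' a y < ν₁ a := by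
  obtain ⟨a₀, ha₀, hpath⟩ := ha
  -- The edges of the path must still carry flow after the earlier reroutings.
  suffices ∃ γ', IsFlow R ν₁ ν₂ γ' ∧ (∀ y, ∑ x, γ' x y = ∑ x, γ x y) ∧ ∑ y, γ' a y < ν₁ a ∧
      ∀ x y, 0 < γ x y → 0 < γ' x y from
    this.imp fun _ h => ⟨h.1, h.2.1, h.2.2.1⟩
  induction hpath with
  | refl => exact ⟨γ, hγ, fun _ => rfl, ha₀, fun _ _ h => h⟩
  | tail _ hstep ih =>
    obtain ⟨y, hR, hpos⟩ := hstep
    obtain ⟨γ', hγ', hcol', hrow', hpos'⟩ := ih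
    obtain ⟨γ'', hγ'', hcol'', hrow'', hpos''⟩ :=
      hγ'.exists_slack_transfer hrow' hR (hpos' _ _ hpos)
    exact ⟨γ'', hγ'', fun y => (hcol'' y).trans (hcol' y), hrow'',
      fun x y h => hpos'' x y (hpos' x y h)⟩

theorem IsFlow.col_eq_of_mem_residualReach (hγ : IsFlow R ν₁ ν₂ γ)
    (hmax : ∀ γ', IsFlow R ν₁ ν₂ γ' → ∑ x, ∑ y, γ' x y ≤ ∑ x, ∑ y, γ x y)
    {a : A} {b : B} (ha : a ∈ residualReach R ν₁ γ) (hab : R a b) :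
    ∑ x, γ x b = ν₂ b := by
  refine (hγ.col_le b).antisymm (not_lt.1 fun hb => ?_)
  obtain ⟨γ', hγ', hcol, hrow⟩ := hγ.exists_slack_of_mem_residualReach ha
  obtain ⟨γ'', hγ'', hlt⟩ := hγ'.exists_augment hrow hab (hcol b ▸ hb)
  have hval : ∑ x, ∑ y, γ' x y = ∑ x, ∑ y, γ x y := by
    rw [Finset.sum_comm, Finset.sum_congr rfl fun y _ => hcol y, Finset.sum_comm]
  linarith [hmax γ'' hγ'']

theorem IsFlow.row_eq_of_notMem_residualReach (hγ : IsFlow R ν₁ ν₂ γ) {a : A}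
    (ha : a ∉ residualReach R ν₁ γ) : ∑ y, γ a y = ν₁ a :=
  (hγ.row_le a).antisymm (not_lt.1 fun h => ha ⟨a, h, .refl⟩)

theorem IsFlow.mem_residualReach_iff (hγ : IsFlow R ν₁ ν₂ γ) {a : A} {b : B} (hab : γ a b ≠ 0) :
    a ∈ residualReach R ν₁ γ ↔ b ∈ relImage R (residualReach R ν₁ γ) := by
  refine ⟨fun ha => ⟨a, ha, hγ.rel a b hab⟩, fun ⟨a', ⟨a₀, ha₀, hpath⟩, hR⟩ => ?_⟩
  exact ⟨a₀, ha₀, hpath.tail ⟨b, hR, (hγ.nonneg a b).lt_of_ne' hab⟩⟩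

theorem exists_isFlow_eq_cut (h₁ : ∀ a, 0 ≤ ν₁ a) (h₂ : ∀ b, 0 ≤ ν₂ b) :
    ∃ γ, IsFlow R ν₁ ν₂ γ ∧ ∃ S : Set A,
      ∑ a, ∑ b, γ a b = ∑ a, Sᶜ.indicator ν₁ a + ∑ b, (relImage R S).indicator ν₂ b := by
  classical
  obtain ⟨γ, hγ, hmax⟩ := exists_max_isFlow (R := R) h₁ h₂
  set S := residualReach R ν₁ γ
  refine ⟨γ, hγ, S, ?_⟩
  have hout : ∀ a, Sᶜ.indicator (fun a => ∑ b, γ a b) a = Sᶜ.indicator ν₁ a := by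
    intro a
    by_cases ha : a ∈ S
    · simp [ha]
    · simp [ha, hγ.row_eq_of_notMem_residualReach ha]
  have hcross : ∀ a b, S.indicator (fun a => γ a b) a = (relImage R S).indicator (γ a) b := by
    intro a b
    by_cases hab : γ a b = 0
    · simp only [Set.indicator_apply, hab, ite_self]
    · exact if_congr (hγ.mem_residualReach_iff hab) rfl rfl
  have hin : ∀ b,
      (relImage R S).indicator (fun b => ∑ a, γ a b) b = (relImage R S).indicator ν₂ b := by
    intro b
    by_cases hb : b ∈ relImage R S
    · obtain ⟨a, ha, hab⟩ := id hb
      simp [hb, hγ.col_eq_of_mem_residualReach hmax ha hab]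
    · simp [hb]
  calc ∑ a, ∑ b, γ a b
      = ∑ a, Sᶜ.indicator (fun a => ∑ b, γ a b) a + ∑ a, ∑ b, S.indicator (fun a => γ a b) a := by
        rw [← Finset.sum_add_distrib]
        refine Finset.sum_congr rfl fun a _ => ?_
        by_cases ha : a ∈ S <;> simp [ha]
    _ = ∑ a, Sᶜ.indicator ν₁ a + ∑ b, (relImage R S).indicator ν₂ b := by
        simp only [hout, hcross, ← hin]
        rw [Finset.sum_comm]
        congr 2 with b
        by_cases hb : b ∈ relImage R S <;> simp [hb]

end Flow

section Lifting

variable {A B : Type*}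

theorem mass_univ (μ : A → ℝ≥0∞) : mass μ Set.univ = ∑' a, μ a :=
  tsum_univ μ

theorem SubDist.tsum_ne_top {μ : A → ℝ≥0∞} (h : SubDist μ) : ∑' a, μ a ≠ ⊤ :=
  mass_univ μ ▸ ne_top_of_le_ne_top ENNReal.one_ne_top h

theorem SubDist.ne_top {μ : A → ℝ≥0∞} (h : SubDist μ) (a : A) : μ a ≠ ⊤ :=
  ENNReal.ne_top_of_tsum_ne_top h.tsum_ne_top a

theorem mass_add_mass_compl (μ : A → ℝ≥0∞) (X : Set A) :
    mass μ X + mass μ Xᶜ = mass μ Set.univ := by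
  rw [mass_univ]
  exact ENNReal.summable.tsum_add_tsum_compl ENNReal.summable

theorem mass_const_mul (c : ℝ≥0∞) (μ : A → ℝ≥0∞) (X : Set A) :
    mass (fun a => c * μ a) X = c * mass μ X :=
  ENNReal.tsum_mul_left

theorem ofReal_sum_indicator_toReal [Fintype A] {μ : A → ℝ≥0∞} (hμ : ∀ a, μ a ≠ ⊤) (X : Set A) :
    ENNReal.ofReal (∑ a, X.indicator (fun a => (μ a).toReal) a) = mass μ X := by
  rw [ENNReal.ofReal_sum_of_nonneg
      fun a _ => Set.indicator_nonneg (fun a _ => ENNReal.toReal_nonneg) a,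
    mass, tsum_subtype, tsum_fintype]
  refine Finset.sum_congr rfl fun a _ => ?_
  by_cases ha : a ∈ X <;> simp [ha, hμ a]

theorem dpDiv_le_tsum {ε : ℝ} {μ ν D : A → ℝ≥0∞}
    (h : ∀ x, μ x ≤ ENNReal.ofReal (Real.exp ε) * ν x + D x) : dpDiv ε μ ν ≤ ∑' x, D x := by
  refine iSup_le fun E => tsub_le_iff_left.2 ?_
  calc mass μ E ≤ ∑' x : E, (ENNReal.ofReal (Real.exp ε) * ν x + D x) :=
        ENNReal.tsum_le_tsum fun x => h x
    _ = ENNReal.ofReal (Real.exp ε) * mass ν E + ∑' x : E, D x := by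
        rw [ENNReal.tsum_add, ENNReal.tsum_mul_left, mass]
    _ ≤ ENNReal.ofReal (Real.exp ε) * mass ν E + ∑' x, D x := by
        gcongr
        exact ENNReal.tsum_comp_le_tsum_of_injective Subtype.val_injective D

theorem starLift_of_flow [Fintype A] [Fintype B] {ε δ : ℝ} {μ₁ : A → ℝ≥0∞}
    {μ₂ : B → ℝ≥0∞} {R : A → B → Prop} (h₁ : SubDist μ₁) (h₂ : SubDist μ₂)
    (η : A → B → ℝ≥0∞) (hR : ∀ a b, η a b ≠ 0 → R a b) (hrow : ∀ a, ∑ b, η a b ≤ μ₁ a)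
    (hcol : ∀ b, ∑ a, η a b ≤ ENNReal.ofReal (Real.exp ε) * μ₂ b)
    (hval : ∑ a, μ₁ a ≤ ∑ a, ∑ b, η a b + ENNReal.ofReal δ) :
    StarLift ε δ μ₁ μ₂ R := by
  set c := ENNReal.ofReal (Real.exp ε)
  have hc₀ : c ≠ 0 := by simp [c, Real.exp_pos]
  let ηL : A × Option B → ℝ≥0∞ := fun p => p.2.elim (μ₁ p.1 - ∑ b, η p.1 b) (η p.1)
  let ηR : Option A × B → ℝ≥0∞ :=
    fun p => p.1.elim (μ₂ p.2 - (∑ a, η a p.2) / c) (fun a => η a p.2 / c)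
  have hmargL : ∀ a, ∑' ob, ηL (a, ob) = μ₁ a := fun a => by
    rw [tsum_fintype, Fintype.sum_option]
    exact tsub_add_cancel_of_le (hrow a)
  have hmargR : ∀ b, ∑' oa, ηR (oa, b) = μ₂ b := fun b => by
    rw [tsum_fintype, Fintype.sum_option]
    simp only [ηR, Option.elim, div_eq_mul_inv, ← Finset.sum_mul]
    exact tsub_add_cancel_of_le (ENNReal.div_le_of_le_mul' (hcol b))
  have hsubL : SubDist ηL := by
    rw [SubDist, mass_univ, ENNReal.tsum_prod', tsum_congr hmargL, ← mass_univ]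
    exact h₁
  have hsubR : SubDist ηR := by
    rw [SubDist, mass_univ, ENNReal.tsum_prod', ENNReal.tsum_comm, tsum_congr hmargR, ← mass_univ]
    exact h₂
  refine ⟨ηL, ηR, hsubL, hsubR, hmargL, hmargR, fun a b => hR a b,
    fun a b h => hR a b fun h0 => h (by simp [ηR, h0]), ?_⟩
  calc dpDiv ε (extL ηL) (extR ηR) ≤ ∑' p, if p.2 = none then extL ηL p else 0 :=
        dpDiv_le_tsum fun p => ?_
    _ = ∑ a, (μ₁ a - ∑ b, η a b) := by
        simp [tsum_fintype, Fintype.sum_prod_type_right, extL, ηL]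
    _ ≤ ENNReal.ofReal δ := by
        have hfin : ∑ a, ∑ b, η a b ≠ ⊤ := ne_top_of_le_ne_top h₁.tsum_ne_top
          ((Finset.sum_le_sum fun a _ => hrow a).trans (ENNReal.sum_le_tsum _))
        rw [← ENNReal.add_le_add_iff_left hfin, ← Finset.sum_add_distrib]
        simp only [add_tsub_cancel_of_le (hrow _)]
        exact hval
  rcases p with ⟨_ | a, _ | b⟩
  · simp [extL]
  · simp [extL]
  · simp [extL]
  · simpa [extL, extR, ηL, ηR] using (ENNReal.mul_div_cancel hc₀ ENNReal.ofReal_ne_top).ge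

theorem starLift_of_isFlow [Fintype A] [Fintype B] {ε δ : ℝ} {μ₁ : A → ℝ≥0∞}
    {μ₂ : B → ℝ≥0∞} {R : A → B → Prop} (h₁ : SubDist μ₁) (h₂ : SubDist μ₂) {γ : A → B → ℝ}
    (hγ : IsFlow R (fun a => (μ₁ a).toReal)
      (fun b => (ENNReal.ofReal (Real.exp ε) * μ₂ b).toReal) γ)
    (hval : ∑ a, μ₁ a ≤ ENNReal.ofReal (∑ a, ∑ b, γ a b) + ENNReal.ofReal δ) :
    StarLift ε δ μ₁ μ₂ R := by
  refine starLift_of_flow h₁ h₂ (fun a b => ENNReal.ofReal (γ a b))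
    (fun a b hab => hγ.rel a b fun h0 => hab (by simp [h0])) (fun a => ?_) (fun b => ?_)
    (hval.trans_eq ?_)
  · rw [← ENNReal.ofReal_sum_of_nonneg fun b _ => hγ.nonneg a b]
    exact ENNReal.ofReal_le_of_le_toReal (hγ.row_le a)
  · rw [← ENNReal.ofReal_sum_of_nonneg fun a _ => hγ.nonneg a b]
    exact ENNReal.ofReal_le_of_le_toReal (hγ.col_le b)
  rw [ENNReal.ofReal_sum_of_nonneg fun a _ => Finset.sum_nonneg fun b _ => hγ.nonneg a b]
  simp_rw [ENNReal.ofReal_sum_of_nonneg fun b _ => hγ.nonneg _ b]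

end Lifting

theorem approx_strassen_finite_general {A B : Type*} [Finite A] [Finite B]
    (μ₁ : A → ℝ≥0∞) (μ₂ : B → ℝ≥0∞) (h₁ : SubDist μ₁) (h₂ : SubDist μ₂)
    (R : A → B → Prop) (ε δ : ℝ)
    (h : ∀ X : Set A,
      mass μ₁ X ≤ ENNReal.ofReal (Real.exp ε) * mass μ₂ (relImage R X) + ENNReal.ofReal δ) :
    StarLift ε δ μ₁ μ₂ R := by
  cases nonempty_fintype A
  cases nonempty_fintype B
  set ν₂ := fun b => ENNReal.ofReal (Real.exp ε) * μ₂ b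
  have hν₂ : ∀ b, ν₂ b ≠ ⊤ := fun b => ENNReal.mul_ne_top ENNReal.ofReal_ne_top (h₂.ne_top b)
  obtain ⟨γ, hγ, S, hcut⟩ := exists_isFlow_eq_cut (R := R) (ν₁ := fun a => (μ₁ a).toReal)
    (ν₂ := fun b => (ν₂ b).toReal) (fun _ => ENNReal.toReal_nonneg) fun _ => ENNReal.toReal_nonneg
  refine starLift_of_isFlow h₁ h₂ hγ ?_
  calc ∑ a, μ₁ a = mass μ₁ S + mass μ₁ Sᶜ := by
        rw [mass_add_mass_compl, mass_univ, tsum_fintype]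
    _ ≤ mass ν₂ (relImage R S) + ENNReal.ofReal δ + mass μ₁ Sᶜ := by
        rw [mass_const_mul]
        gcongr
        exact h S
    _ = ENNReal.ofReal (∑ a, ∑ b, γ a b) + ENNReal.ofReal δ := by
        rw [hcut, ENNReal.ofReal_add
          (Finset.sum_nonneg fun _ _ => Set.indicator_nonneg (fun _ _ => ENNReal.toReal_nonneg) _)
          (Finset.sum_nonneg fun _ _ => Set.indicator_nonneg (fun _ _ => ENNReal.toReal_nonneg) _),
          ofReal_sum_indicator_toReal h₁.ne_top, ofReal_sum_indicator_toReal hν₂]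
        ring

theorem approx_strassen_finite {A B : Type*} [Finite A] [Finite B]
    (μ₁ : A → ℝ≥0∞) (μ₂ : B → ℝ≥0∞) (h₁ : SubDist μ₁) (h₂ : SubDist μ₂)
    (R : A → B → Prop) (ε δ : ℝ) (hε : 0 ≤ ε) (hδ : 0 ≤ δ)
    (h : ∀ X : Set A,
      mass μ₁ X ≤ ENNReal.ofReal (Real.exp ε) * mass μ₂ (relImage R X) + ENNReal.ofReal δ) :
    StarLift ε δ μ₁ μ₂ R :=
  approx_strassen_finite_general μ₁ μ₂ h₁ h₂ R ε δ h
end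
end

section
/- (Easy direction of approximate Strassen.) Let μ₁ ∈ SubDist(A), μ₂ ∈ SubDist(B), R ⊆ A × B, ε, δ ≥ 0. If there exists an (ε,δ)-approximate ⋆-lifting of μ₁ and μ₂ for R, then for every X ⊆ A, μ₁[X] ≤ e^ε · μ₂[R(X)] + δ, where R(X) = {b : ∃a ∈ X, (a,b) ∈ R}. -/
open scoped ENNReal

noncomputable section

/-! The set `E = X⋆ × R(X)⋆ ⊆ A⋆ × B⋆`, where `S⋆ = S ∪ {⋆}`, separates the two witnesses: every `ηL`-pair over `X`
lands in `E` because `ηL` is supported in `R`, while every `ηR`-pair in `E` has its second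
component in `R(X)`. Hence `μ₁[X] ≤ ηL⋆[E] ≤ e^ε ηR⋆[E] + δ ≤ e^ε μ₂[R(X)] + δ`. -/

section Mass

variable {α β γ : Type*}

lemma mass_le_mass_of_support {μ : α → ℝ≥0∞} {S T : Set α} (h : ∀ x ∈ S, μ x ≠ 0 → x ∈ T) :
    mass μ S ≤ mass μ T := by
  simp only [mass, tsum_subtype]
  refine ENNReal.tsum_le_tsum fun x => Set.indicator_apply_le' (fun hx => ?_) fun _ => zero_le
  rcases eq_or_ne (μ x) 0 with h0 | hne
  · exact h0 ▸ zero_le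
  · rw [Set.indicator_of_mem (h x hx hne)]

lemma mass_mono (μ : α → ℝ≥0∞) {S T : Set α} (h : S ⊆ T) : mass μ S ≤ mass μ T :=
  mass_le_mass_of_support fun _ hx _ => h hx

lemma mass_eq_mass_comp_of_injective {f : α → β} (hf : f.Injective) {g : β → ℝ≥0∞}
    (hg : ∀ b ∉ Set.range f, g b = 0) (S : Set β) :
    mass g S = mass (g ∘ f) (f ⁻¹' S) := by
  simp only [mass, tsum_subtype]
  refine (hf.tsum_eq fun b hb => ?_).symm
  by_contra hf_b
  exact hb (Set.indicator_apply_eq_zero.2 fun _ => hg b hf_b)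

lemma mass_fst_preimage {η : α × β → ℝ≥0∞} {μ : α → ℝ≥0∞} (hη : ∀ a, ∑' b, η (a, b) = μ a)
    (X : Set α) : mass η (Prod.fst ⁻¹' X) = mass μ X := by
  simp only [mass, tsum_subtype, ENNReal.tsum_prod']
  refine tsum_congr fun a => ?_
  by_cases ha : a ∈ X
  · simp [ha, hη]
  · simp [ha]

lemma mass_snd_preimage {η : α × β → ℝ≥0∞} {μ : β → ℝ≥0∞} (hη : ∀ b, ∑' a, η (a, b) = μ b)
    (Y : Set β) : mass η (Prod.snd ⁻¹' Y) = mass μ Y := by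
  rw [mass_eq_mass_comp_of_injective (f := Prod.swap) Prod.swap_injective
    (fun p hp => absurd ⟨p.swap, p.swap_swap⟩ hp)]
  exact mass_fst_preimage hη Y

lemma mass_extL (η : α × Option β → ℝ≥0∞) (S : Set (Option α × Option β)) :
    mass (extL η) S = mass η (Prod.map some id ⁻¹' S) :=
  mass_eq_mass_comp_of_injective ((Option.some_injective α).prodMap Function.injective_id)
    (fun ⟨a, b⟩ hp => by
      cases a with
      | none => rfl
      | some a => exact absurd ⟨(a, b), rfl⟩ hp) S

lemma mass_extR (η : Option α × β → ℝ≥0∞) (S : Set (Option α × Option β)) :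
    mass (extR η) S = mass η (Prod.map id some ⁻¹' S) :=
  mass_eq_mass_comp_of_injective (Function.injective_id.prodMap (Option.some_injective β))
    (fun ⟨a, b⟩ hp => by
      cases b with
      | none => rfl
      | some b => exact absurd ⟨(a, b), rfl⟩ hp) S

lemma mass_le_of_dpDiv_le {ε : ℝ} {μ ν : γ → ℝ≥0∞} {δ : ℝ≥0∞} (h : dpDiv ε μ ν ≤ δ)
    (E : Set γ) : mass μ E ≤ ENNReal.ofReal (Real.exp ε) * mass ν E + δ :=
  tsub_le_iff_left.1 <|
    (le_iSup (fun E => mass μ E - ENNReal.ofReal (Real.exp ε) * mass ν E) E).trans h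

end Mass

theorem approx_strassen_easy_general {A B : Type*}
    (μ₁ : A → ℝ≥0∞) (μ₂ : B → ℝ≥0∞)
    (R : A → B → Prop) (ε δ : ℝ)
    (h : StarLift ε δ μ₁ μ₂ R) :
    ∀ X : Set A,
      mass μ₁ X ≤ ENNReal.ofReal (Real.exp ε) * mass μ₂ (relImage R X) + ENNReal.ofReal δ := by
  intro X
  obtain ⟨ηL, ηR, -, -, hηL, hηR, hsuppL, -, hdiv⟩ := h
  set Y := relImage R X
  let E : Set (Option A × Option B) := {p | (∀ a ∈ p.1, a ∈ X) ∧ ∀ b ∈ p.2, b ∈ Y}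
  have hL : mass μ₁ X ≤ mass (extL ηL) E := by
    rw [← mass_fst_preimage hηL, mass_extL]
    refine mass_le_mass_of_support fun ⟨a, b⟩ ha hne =>
      ⟨fun a' h => Option.some_inj.1 h ▸ ha, fun b' h => ?_⟩
    cases Option.mem_def.1 h
    exact ⟨a, ha, hsuppL a b' hne⟩
  have hR : mass (extR ηR) E ≤ mass μ₂ Y := by
    rw [← mass_snd_preimage hηR, mass_extR]
    exact mass_mono _ fun p hp => hp.2 p.2 rfl
  calc mass μ₁ X ≤ mass (extL ηL) E := hL
    _ ≤ ENNReal.ofReal (Real.exp ε) * mass (extR ηR) E + ENNReal.ofReal δ :=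
      mass_le_of_dpDiv_le hdiv E
    _ ≤ ENNReal.ofReal (Real.exp ε) * mass μ₂ Y + ENNReal.ofReal δ := by gcongr

theorem approx_strassen_easy {A B : Type*}
    (μ₁ : A → ℝ≥0∞) (μ₂ : B → ℝ≥0∞) (h₁ : SubDist μ₁) (h₂ : SubDist μ₂)
    (R : A → B → Prop) (ε δ : ℝ) (hε : 0 ≤ ε) (hδ : 0 ≤ δ)
    (h : StarLift ε δ μ₁ μ₂ R) :
    ∀ X : Set A,
      mass μ₁ X ≤ ENNReal.ofReal (Real.exp ε) * mass μ₂ (relImage R X) + ENNReal.ofReal δ :=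
  approx_strassen_easy_general μ₁ μ₂ R ε δ h
end
end

section
/- (Support lemma for ⋆-liftings.) If μ₁ ∈ SubDist(A) and μ₂ ∈ SubDist(B) admit an (ε,δ)-approximate ⋆-lifting for R ⊆ A × B, then there exist witnesses η_L, η_R for this lifting whose supports are contained in supp(μ₁)⋆ × supp(μ₂)⋆. -/
open scoped ENNReal

noncomputable section

/-!
Push both witnesses forward along the map that sends every point of `μ₁`- or `μ₂`-mass zero to
`⋆`. Marginals and the relation constraint survive, since mass only moves to `⋆` and the rows of
`ηL` (columns of `ηR`) over null points already vanish. For the same reason the zero-extensions of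
the new witnesses are the pushforwards of the old ones along one common map, so the
data-processing inequality for `dpDiv` keeps the `δ` bound.
-/

section Push

variable {X Y Z : Type*}

def push (T : X → Y) (μ : X → ℝ≥0∞) (y : Y) : ℝ≥0∞ := mass μ (T ⁻¹' {y})

lemma mass_push (T : X → Y) (μ : X → ℝ≥0∞) (E : Set Y) :
    mass (push T μ) E = mass μ (T ⁻¹' E) := by
  rw [mass, mass, tsum_subtype, tsum_subtype, ← ENNReal.tsum_fiberwise _ T]
  refine tsum_congr fun y => ?_
  by_cases hy : y ∈ E
  · rw [Set.indicator_of_mem hy, push, mass]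
    refine tsum_congr fun x => ?_
    have hx : T x = y := x.2
    rw [Set.indicator_of_mem (by rwa [Set.mem_preimage, hx])]
  · rw [Set.indicator_of_notMem hy, eq_comm, ENNReal.tsum_eq_zero]
    intro x
    have hx : T x = y := x.2
    exact Set.indicator_of_notMem (by rwa [Set.mem_preimage, hx]) μ

lemma push_push (S : Y → Z) (T : X → Y) (μ : X → ℝ≥0∞) :
    push S (push T μ) = push (S ∘ T) μ :=
  funext fun z => mass_push T μ (S ⁻¹' {z})

lemma push_congr {S T : X → Y} {μ : X → ℝ≥0∞} (h : ∀ x, μ x ≠ 0 → S x = T x) :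
    push S μ = push T μ := by
  funext y
  simp only [push, mass, tsum_subtype]
  refine tsum_congr fun x => ?_
  by_cases hx : μ x = 0
  · simp [Set.indicator, hx]
  · exact Set.indicator_eq_indicator (by rw [Set.mem_preimage, Set.mem_preimage, h x hx]) rfl

lemma push_apply_of_injective {T : X → Y} (hT : T.Injective) (μ : X → ℝ≥0∞)
    (x : X) : push T μ (T x) = μ x := by
  rw [push, mass, ← Set.image_singleton, hT.preimage_image, tsum_singleton]

lemma push_apply_of_notMem_range {T : X → Y} (μ : X → ℝ≥0∞) {y : Y}
    (hy : y ∉ Set.range T) : push T μ y = 0 := by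
  rw [push, Set.preimage_singleton_eq_empty.2 hy, mass, tsum_empty]

lemma exists_ne_zero_of_push_ne_zero {T : X → Y} {μ : X → ℝ≥0∞} {y : Y}
    (h : push T μ y ≠ 0) : ∃ x, T x = y ∧ μ x ≠ 0 := by
  obtain ⟨x, hx⟩ := not_forall.1 (mt ENNReal.tsum_eq_zero.2 h)
  exact ⟨x, x.2, hx⟩

lemma subDist_push (T : X → Y) {μ : X → ℝ≥0∞} (h : SubDist μ) : SubDist (push T μ) := by
  rwa [SubDist, mass_push, Set.preimage_univ]

lemma dpDiv_push_le (T : X → Y) (ε : ℝ) (μ ν : X → ℝ≥0∞) :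
    dpDiv ε (push T μ) (push T ν) ≤ dpDiv ε μ ν :=
  iSup_le fun E => by
    rw [mass_push, mass_push]
    exact le_iSup (fun F => mass μ F - ENNReal.ofReal (Real.exp ε) * mass ν F) (T ⁻¹' E)

lemma push_fst_apply (ν : X × Y → ℝ≥0∞) (x : X) : push Prod.fst ν x = ∑' y, ν (x, y) := by
  rw [push, mass, Set.preimage_fst_singleton_eq_range, tsum_range _ (Prod.mk_right_injective x)]

lemma push_snd_apply (ν : X × Y → ℝ≥0∞) (y : Y) : push Prod.snd ν y = ∑' x, ν (x, y) := by
  rw [push, mass, Set.preimage_snd_singleton_eq_range, tsum_range _ (Prod.mk_left_injective y)]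

end Push

section Marginal

variable {X Y Z : Type*}

lemma tsum_push_mapSnd (g : Y → Z) (η : X × Y → ℝ≥0∞) (x : X) :
    ∑' z, push (Prod.map id g) η (x, z) = ∑' y, η (x, y) := by
  rw [← push_fst_apply, ← push_fst_apply, push_push]
  rfl

lemma tsum_push_mapFst (f : X → Z) (η : X × Y → ℝ≥0∞) (y : Y) :
    ∑' z, push (Prod.map f id) η (z, y) = ∑' x, η (x, y) := by
  rw [← push_snd_apply, ← push_snd_apply, push_push]
  rfl

lemma exists_ne_zero_of_push_mapSnd_ne_zero {g : Y → Z} {η : X × Y → ℝ≥0∞} {x : X} {z : Z}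
    (h : push (Prod.map id g) η (x, z) ≠ 0) : ∃ y, g y = z ∧ η (x, y) ≠ 0 := by
  obtain ⟨⟨x', y⟩, hxy, hη⟩ := exists_ne_zero_of_push_ne_zero h
  obtain ⟨rfl, rfl⟩ := Prod.mk.inj hxy
  exact ⟨y, rfl, hη⟩

lemma exists_ne_zero_of_push_mapFst_ne_zero {f : X → Z} {η : X × Y → ℝ≥0∞} {z : Z} {y : Y}
    (h : push (Prod.map f id) η (z, y) ≠ 0) : ∃ x, f x = z ∧ η (x, y) ≠ 0 := by
  obtain ⟨⟨x, y'⟩, hxy, hη⟩ := exists_ne_zero_of_push_ne_zero h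
  obtain ⟨rfl, rfl⟩ := Prod.mk.inj hxy
  exact ⟨x, rfl, hη⟩

lemma ne_zero_of_row_entry_ne_zero {η : X × Y → ℝ≥0∞} {μ : X → ℝ≥0∞}
    (hμ : ∀ x, ∑' y, η (x, y) = μ x) {x : X} {y : Y} (h : η (x, y) ≠ 0) : μ x ≠ 0 :=
  fun h0 => h (ENNReal.tsum_eq_zero.1 ((hμ x).trans h0) y)

lemma ne_zero_of_column_entry_ne_zero {η : X × Y → ℝ≥0∞} {μ : Y → ℝ≥0∞}
    (hμ : ∀ y, ∑' x, η (x, y) = μ y) {x : X} {y : Y} (h : η (x, y) ≠ 0) : μ y ≠ 0 :=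
  fun h0 => h (ENNReal.tsum_eq_zero.1 ((hμ y).trans h0) x)

end Marginal

section Star

variable {A B : Type*}

lemma extL_eq_push (η : A × Option B → ℝ≥0∞) : extL η = push (Prod.map some id) η := by
  funext ⟨oa, ob⟩
  cases oa with
  | none => exact (push_apply_of_notMem_range η (by simp)).symm
  | some a =>
    exact (push_apply_of_injective ((Option.some_injective _).prodMap
      Function.injective_id) η (a, ob)).symm

lemma extR_eq_push (η : Option A × B → ℝ≥0∞) : extR η = push (Prod.map id some) η := by
  funext ⟨oa, ob⟩
  cases ob with
  | none => exact (push_apply_of_notMem_range η (by simp)).symm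
  | some b =>
    exact (push_apply_of_injective (Function.injective_id.prodMap
      (Option.some_injective _)) η (oa, b)).symm

open scoped Classical in
def pruneStar (μ : A → ℝ≥0∞) : Option A → Option A := Option.filter fun a => μ a ≠ 0

lemma pruneStar_eq_some_iff {μ : A → ℝ≥0∞} {oa : Option A} {a : A} :
    pruneStar μ oa = some a ↔ oa = some a ∧ μ a ≠ 0 := by
  simp [pruneStar, Option.filter_eq_some_iff]

lemma extL_push_mapSnd (μ₁ : A → ℝ≥0∞) (g : Option B → Option B) {η : A × Option B → ℝ≥0∞}
    (hη : ∀ a ob, η (a, ob) ≠ 0 → μ₁ a ≠ 0) :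
    extL (push (Prod.map id g) η) = push (Prod.map (pruneStar μ₁) g) (extL η) := by
  rw [extL_eq_push, extL_eq_push, push_push, push_push, Prod.map_comp_map, Prod.map_comp_map]
  exact push_congr fun x hx => Prod.ext (pruneStar_eq_some_iff.2 ⟨rfl, hη x.1 x.2 hx⟩).symm rfl

lemma extR_push_mapFst (μ₂ : B → ℝ≥0∞) (f : Option A → Option A) {η : Option A × B → ℝ≥0∞}
    (hη : ∀ oa b, η (oa, b) ≠ 0 → μ₂ b ≠ 0) :
    extR (push (Prod.map f id) η) = push (Prod.map f (pruneStar μ₂)) (extR η) := by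
  rw [extR_eq_push, extR_eq_push, push_push, push_push, Prod.map_comp_map, Prod.map_comp_map]
  exact push_congr fun x hx => Prod.ext rfl (pruneStar_eq_some_iff.2 ⟨rfl, hη x.1 x.2 hx⟩).symm

theorem IsStarWitness.push_pruneStar {ε δ : ℝ} {μ₁ : A → ℝ≥0∞} {μ₂ : B → ℝ≥0∞}
    {R : A → B → Prop} {ηL : A × Option B → ℝ≥0∞} {ηR : Option A × B → ℝ≥0∞}
    (hw : IsStarWitness ε δ μ₁ μ₂ R ηL ηR) :
    IsStarWitness ε δ μ₁ μ₂ R (push (Prod.map id (pruneStar μ₂)) ηL)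
      (push (Prod.map (pruneStar μ₁) id) ηR) := by
  obtain ⟨hL, hR, hmL, hmR, hRL, hRR, hdp⟩ := hw
  refine ⟨subDist_push _ hL, subDist_push _ hR, fun a => (tsum_push_mapSnd _ _ a).trans (hmL a),
    fun b => (tsum_push_mapFst _ _ b).trans (hmR b), fun a b h => ?_, fun a b h => ?_, ?_⟩
  · obtain ⟨ob, hob, hη⟩ := exists_ne_zero_of_push_mapSnd_ne_zero h
    obtain ⟨rfl, -⟩ := pruneStar_eq_some_iff.1 hob
    exact hRL a b hη
  · obtain ⟨oa, hoa, hη⟩ := exists_ne_zero_of_push_mapFst_ne_zero h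
    obtain ⟨rfl, -⟩ := pruneStar_eq_some_iff.1 hoa
    exact hRR a b hη
  · rw [extL_push_mapSnd μ₁ _ fun a ob => ne_zero_of_row_entry_ne_zero hmL,
      extR_push_mapFst μ₂ _ fun oa b => ne_zero_of_column_entry_ne_zero hmR]
    exact (dpDiv_push_le _ ε _ _).trans hdp

end Star

theorem starLift_support_general {A B : Type*}
    (μ₁ : A → ℝ≥0∞) (μ₂ : B → ℝ≥0∞)
    (R : A → B → Prop) (ε δ : ℝ)
    (h : StarLift ε δ μ₁ μ₂ R) :
    ∃ ηL ηR, IsStarWitness ε δ μ₁ μ₂ R ηL ηR ∧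
      (∀ a (b : Option B), ηL (a, b) ≠ 0 →
        μ₁ a ≠ 0 ∧ ∀ b', b = some b' → μ₂ b' ≠ 0) ∧
      (∀ (a : Option A) b, ηR (a, b) ≠ 0 →
        μ₂ b ≠ 0 ∧ ∀ a', a = some a' → μ₁ a' ≠ 0) := by
  obtain ⟨ηL, ηR, hw⟩ := h
  have ⟨_, _, hmL, hmR, _⟩ := hw
  refine ⟨_, _, hw.push_pruneStar, fun a ob h => ?_, fun oa b h => ?_⟩
  · obtain ⟨ob₀, rfl, hη⟩ := exists_ne_zero_of_push_mapSnd_ne_zero h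
    exact ⟨ne_zero_of_row_entry_ne_zero hmL hη, fun b hb => (pruneStar_eq_some_iff.1 hb).2⟩
  · obtain ⟨oa₀, rfl, hη⟩ := exists_ne_zero_of_push_mapFst_ne_zero h
    exact ⟨ne_zero_of_column_entry_ne_zero hmR hη, fun a ha => (pruneStar_eq_some_iff.1 ha).2⟩

theorem starLift_support {A B : Type*}
    (μ₁ : A → ℝ≥0∞) (μ₂ : B → ℝ≥0∞) (h₁ : SubDist μ₁) (h₂ : SubDist μ₂)
    (R : A → B → Prop) (ε δ : ℝ) (hε : 0 ≤ ε) (hδ : 0 ≤ δ)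
    (h : StarLift ε δ μ₁ μ₂ R) :
    ∃ ηL ηR, IsStarWitness ε δ μ₁ μ₂ R ηL ηR ∧
      (∀ a (b : Option B), ηL (a, b) ≠ 0 →
        μ₁ a ≠ 0 ∧ ∀ b', b = some b' → μ₂ b' ≠ 0) ∧
      (∀ (a : Option A) b, ηR (a, b) ≠ 0 →
        μ₂ b ≠ 0 ∧ ∀ a', a = some a' → μ₁ a' ≠ 0) :=
  starLift_support_general μ₁ μ₂ R ε δ h
end
end

section
/- (Up-to-bad, left.) Let μ₁ ∈ SubDist(A), μ₂ ∈ SubDist(B), θ ⊆ A, R ⊆ A × B. Suppose for all X ⊆ A, μ₁[X] ≤ e^ε μ₂[(θ_◁ ⟹ R)(X)] + δ, where (θ_◁ ⟹ R) = {(a,b) : a ∈ θ → (a,b) ∈ R}. Then for all X ⊆ A, μ₁[X] ≤ e^ε μ₂[R(X)] + δ + μ₁[A∖θ]. -/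
open scoped ENNReal

noncomputable section

/-!
Split `X` into its good part `X ∩ θ` and a subset of the bad set `θᶜ`. On the good part the
relation `θ_◁ ⟹ R` coincides with `R`, so the hypothesis applied to `X ∩ θ` bounds its mass by
`e^ε μ₂[R(X)] + δ`, while the rest of `X` costs at most `μ₁[θᶜ]`.
-/

section Mass

variable {A : Type*} (μ : A → ℝ≥0∞)

theorem mass_mono_s8 {X Y : Set A} (hXY : X ⊆ Y) : mass μ X ≤ mass μ Y :=
  ENNReal.tsum_mono_subtype μ hXY

theorem mass_union_le (X Y : Set A) : mass μ (X ∪ Y) ≤ mass μ X + mass μ Y :=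
  ENNReal.tsum_union_le μ X Y

theorem mass_le_mass_inter_add_mass_compl (X θ : Set A) :
    mass μ X ≤ mass μ (X ∩ θ) + mass μ θᶜ :=
  calc mass μ X ≤ mass μ ((X ∩ θ) ∪ θᶜ) :=
        mass_mono_s8 μ fun a ha => (em (a ∈ θ)).imp (fun hθ => ⟨ha, hθ⟩) id
    _ ≤ mass μ (X ∩ θ) + mass μ θᶜ := mass_union_le μ _ _

end Mass

theorem relImage_imp_inter_subset {A B : Type*} (θ : Set A) (R : A → B → Prop) (X : Set A) :
    relImage (fun a b => a ∈ θ → R a b) (X ∩ θ) ⊆ relImage R X :=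
  fun _ ⟨a, ⟨haX, haθ⟩, hab⟩ => ⟨a, haX, hab haθ⟩

theorem up_to_bad_left_general {A B : Type*}
    (μ₁ : A → ℝ≥0∞) (μ₂ : B → ℝ≥0∞)
    (θ : Set A) (R : A → B → Prop) (ε δ : ℝ)
    (h : ∀ X : Set A,
      mass μ₁ X ≤ ENNReal.ofReal (Real.exp ε)
          * mass μ₂ (relImage (fun a b => a ∈ θ → R a b) X) + ENNReal.ofReal δ) :
    ∀ X : Set A,
      mass μ₁ X ≤ ENNReal.ofReal (Real.exp ε) * mass μ₂ (relImage R X)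
        + ENNReal.ofReal δ + mass μ₁ θᶜ := by
  intro X
  calc mass μ₁ X ≤ mass μ₁ (X ∩ θ) + mass μ₁ θᶜ := mass_le_mass_inter_add_mass_compl μ₁ X θ
    _ ≤ ENNReal.ofReal (Real.exp ε) * mass μ₂ (relImage (fun a b => a ∈ θ → R a b) (X ∩ θ))
        + ENNReal.ofReal δ + mass μ₁ θᶜ := by gcongr; exact h (X ∩ θ)
    _ ≤ _ := by gcongr; exact mass_mono_s8 μ₂ (relImage_imp_inter_subset θ R X)

theorem up_to_bad_left {A B : Type*} [Countable A] [Countable B]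
    (μ₁ : A → ℝ≥0∞) (μ₂ : B → ℝ≥0∞) (h₁ : SubDist μ₁) (h₂ : SubDist μ₂)
    (θ : Set A) (R : A → B → Prop) (ε δ : ℝ) (hε : 0 ≤ ε) (hδ : 0 ≤ δ)
    (h : ∀ X : Set A,
      mass μ₁ X ≤ ENNReal.ofReal (Real.exp ε)
          * mass μ₂ (relImage (fun a b => a ∈ θ → R a b) X) + ENNReal.ofReal δ) :
    ∀ X : Set A,
      mass μ₁ X ≤ ENNReal.ofReal (Real.exp ε) * mass μ₂ (relImage R X)
        + ENNReal.ofReal δ + mass μ₁ θᶜ :=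
  up_to_bad_left_general μ₁ μ₂ θ R ε δ h
end
end

section
/- (⋆-liftings characterize differential privacy.) A randomized algorithm P : A → SubDist(B) is (ε,δ)-differentially private w.r.t. adjacency relation φ ⊆ A × A if and only if for all (a₁,a₂) ∈ φ there exists an (ε,δ)-approximate ⋆-lifting of P(a₁) and P(a₂) for the equality relation on B. -/
open scoped ENNReal

noncomputable section

/-!
Testing a lifting `(ηL, ηR)` on the event `some '' X ×ˢ univ` gives back `μ₁ X` on the left,
while on the right the support condition confines the mass to `R X`; hence
`μ₁ X ≤ e^ε μ₂ (R X) + δ`. Conversely, for the equality relation put `min (μ₁ b) (e^ε μ₂ b)` on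
the diagonal and send the excess `μ₁ b - e^ε μ₂ b` to `⋆`. The total excess is the DP gap of the
event `{b | e^ε μ₂ b < μ₁ b}`, so it is at most `δ`, and it bounds the divergence of the
zero-extensions.
-/

open Set Function

section Mass

variable {α β : Type*}

lemma mass_univ_eq_tsum (μ : α → ℝ≥0∞) : mass μ univ = ∑' x, μ x :=
  tsum_univ μ

lemma mass_le_tsum (μ : α → ℝ≥0∞) (X : Set α) : mass μ X ≤ ∑' x, μ x :=
  ENNReal.tsum_comp_le_tsum_of_injective Subtype.val_injective μ

lemma mass_mono_of_support {μ : α → ℝ≥0∞} {X Y : Set α} (h : ∀ x ∈ X, μ x ≠ 0 → x ∈ Y) :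
    mass μ X ≤ mass μ Y := by
  rw [mass, mass, tsum_subtype, tsum_subtype]
  refine ENNReal.tsum_le_tsum fun x => ?_
  refine Set.indicator_apply_le' (fun hx => ?_) fun _ => bot_le
  by_cases hμx : μ x = 0
  · simp [hμx]
  · rw [Set.indicator_of_mem (h x hx hμx)]

lemma mass_image {f : α → β} (hf : Injective f) (μ : β → ℝ≥0∞) (X : Set α) :
    mass μ (f '' X) = mass (μ ∘ f) X :=
  tsum_image μ hf.injOn

lemma mass_prod_univ (η : α × β → ℝ≥0∞) (X : Set α) :
    mass η (X ×ˢ univ) = mass (fun a => ∑' b, η (a, b)) X := by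
  rw [mass, ← (Equiv.Set.prod X univ).symm.tsum_eq, ENNReal.tsum_prod']
  exact tsum_congr fun a => tsum_univ (fun b => η (a, b))

lemma mass_univ_prod (η : α × β → ℝ≥0∞) (Y : Set β) :
    mass η (univ ×ˢ Y) = mass (fun b => ∑' a, η (a, b)) Y := by
  rw [mass, ← (Equiv.Set.prod univ Y).symm.tsum_eq, ENNReal.tsum_prod', ENNReal.tsum_comm]
  exact tsum_congr fun b => tsum_univ (fun a => η (a, b))

lemma SubDist.of_tsum_right {μ : α → ℝ≥0∞} {η : α × β → ℝ≥0∞} (hμ : SubDist μ)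
    (h : ∀ a, ∑' b, η (a, b) = μ a) : SubDist η := by
  rwa [SubDist, ← univ_prod_univ, mass_prod_univ, funext h]

lemma SubDist.of_tsum_left {ν : β → ℝ≥0∞} {η : α × β → ℝ≥0∞} (hν : SubDist ν)
    (h : ∀ b, ∑' a, η (a, b) = ν b) : SubDist η := by
  rwa [SubDist, ← univ_prod_univ, mass_univ_prod, funext h]

lemma mass_le_mul_add_tsum {μ ν h : α → ℝ≥0∞} {c : ℝ≥0∞} (hle : ∀ x, μ x ≤ c * ν x + h x)
    (X : Set α) : mass μ X ≤ c * mass ν X + ∑' x, h x :=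
  calc mass μ X ≤ ∑' x : X, (c * ν x + h x) := ENNReal.tsum_le_tsum fun x => hle x
    _ = c * mass ν X + mass h X := by rw [ENNReal.tsum_add, ENNReal.tsum_mul_left]; rfl
    _ ≤ c * mass ν X + ∑' x, h x := by gcongr; exact mass_le_tsum h X

lemma tsum_tsub_mul_le {μ ν : α → ℝ≥0∞} {c d : ℝ≥0∞} (hc : c ≠ ∞) (hν : SubDist ν)
    (h : ∀ E, mass μ E ≤ c * mass ν E + d) : ∑' x, (μ x - c * ν x) ≤ d := by
  set E := {x | c * ν x < μ x}
  have hsupp : support (fun x => μ x - c * ν x) ⊆ E := fun x hx =>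
    lt_of_not_ge fun hle => hx (tsub_eq_zero_of_le hle)
  have hfin : c * mass ν E ≠ ∞ :=
    ENNReal.mul_ne_top hc (ne_top_of_le_ne_top ENNReal.one_ne_top
      ((mass_le_tsum ν E).trans ((mass_univ_eq_tsum ν).symm.le.trans hν)))
  rw [← tsum_subtype_eq_of_support_subset hsupp, ← ENNReal.add_le_add_iff_right hfin]
  calc ∑' x : E, (μ x - c * ν x) + c * mass ν E = mass μ E := by
        rw [mass, mass, ← ENNReal.tsum_mul_left, ← ENNReal.tsum_add]
        exact tsum_congr fun x => tsub_add_cancel_of_le x.2.le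
    _ ≤ d + c * mass ν E := (h E).trans_eq (add_comm _ _)

end Mass

lemma dpDiv_le_iff {α : Type*} {ε : ℝ} {μ ν : α → ℝ≥0∞} {d : ℝ≥0∞} :
    dpDiv ε μ ν ≤ d ↔ ∀ E, mass μ E ≤ ENNReal.ofReal (Real.exp ε) * mass ν E + d := by
  simp only [dpDiv, iSup_le_iff, tsub_le_iff_left]

lemma relImage_eq {α : Type*} (X : Set α) : relImage (fun a b : α => a = b) X = X := by
  ext; simp [relImage]

lemma tsum_extL {α β : Type*} (η : α × Option β → ℝ≥0∞) : ∑' p, extL η p = ∑' q, η q := by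
  refine ((Option.some_injective α).prodMap injective_id).tsum_eq ?_ |>.symm
  rintro ⟨_ | a, o⟩ h
  · exact absurd rfl h
  · exact ⟨(a, o), rfl⟩

lemma IsStarWitness.mass_le {α β : Type*} {ε δ : ℝ} {μ₁ : α → ℝ≥0∞} {μ₂ : β → ℝ≥0∞}
    {R : α → β → Prop} {ηL : α × Option β → ℝ≥0∞} {ηR : Option α × β → ℝ≥0∞}
    (h : IsStarWitness ε δ μ₁ μ₂ R ηL ηR) (X : Set α) :
    mass μ₁ X ≤ ENNReal.ofReal (Real.exp ε) * mass μ₂ (relImage R X) + ENNReal.ofReal δ := by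
  obtain ⟨-, -, hL, hR, -, hsuppR, hdiv⟩ := h
  set Y := Prod.map some id '' (X ×ˢ univ)
  have hleft : mass (extL ηL) Y = mass μ₁ X := by
    rw [mass_image ((Option.some_injective α).prodMap injective_id), mass_prod_univ]
    exact congrArg (mass · X) (funext hL)
  have hright : mass (extR ηR) Y ≤ mass μ₂ (relImage R X) :=
    calc mass (extR ηR) Y ≤ mass (extR ηR) (Prod.map id some '' (univ ×ˢ relImage R X)) := by
          refine mass_mono_of_support ?_
          rintro _ ⟨⟨a, _ | b⟩, ⟨ha, -⟩, rfl⟩ hne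
          · exact absurd rfl hne
          · exact ⟨(some a, b), ⟨trivial, a, ha, hsuppR a b hne⟩, rfl⟩
      _ = mass μ₂ (relImage R X) := by
          rw [mass_image (injective_id.prodMap (Option.some_injective β)), mass_univ_prod]
          exact congrArg (mass · _) (funext hR)
  calc mass μ₁ X = mass (extL ηL) Y := hleft.symm
    _ ≤ ENNReal.ofReal (Real.exp ε) * mass (extR ηR) Y + ENNReal.ofReal δ :=
        dpDiv_le_iff.1 hdiv Y
    _ ≤ ENNReal.ofReal (Real.exp ε) * mass μ₂ (relImage R X) + ENNReal.ofReal δ := by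
        gcongr

section EqLift

variable {α β : Type*}

def toStar (f : α → ℝ≥0∞) (p : α × Option β) : ℝ≥0∞ :=
  if p.2 = none then f p.1 else 0

lemma tsum_extL_toStar (f : α → ℝ≥0∞) :
    ∑' p, extL (toStar f : α × Option β → ℝ≥0∞) p = ∑' a, f a := by
  rw [tsum_extL, ENNReal.tsum_prod']
  exact tsum_congr fun a => by simp [toStar]

variable [DecidableEq α]

def eqLiftLeft (c : ℝ≥0∞) (μ ν : α → ℝ≥0∞) (p : α × Option α) : ℝ≥0∞ :=
  (if p.2 = some p.1 then min (μ p.1) (c * ν p.1) else 0) + toStar (fun a => μ a - c * ν a) p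

def eqLiftRight (ν : α → ℝ≥0∞) (p : Option α × α) : ℝ≥0∞ :=
  if p.1 = some p.2 then ν p.2 else 0

lemma tsum_eqLiftLeft (c : ℝ≥0∞) (μ ν : α → ℝ≥0∞) (a : α) :
    ∑' o, eqLiftLeft c μ ν (a, o) = μ a := by
  simp [eqLiftLeft, toStar, ENNReal.tsum_add, add_comm (min _ _), tsub_add_min]

lemma tsum_eqLiftRight (ν : α → ℝ≥0∞) (a : α) : ∑' o, eqLiftRight ν (o, a) = ν a := by
  simp [eqLiftRight]

lemma extL_eqLiftLeft_le (c : ℝ≥0∞) (μ ν : α → ℝ≥0∞) (p : Option α × Option α) :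
    extL (eqLiftLeft c μ ν) p ≤
      c * extR (eqLiftRight ν) p + extL (toStar fun a => μ a - c * ν a) p := by
  rcases p with ⟨_ | a, _ | b⟩
  · simp [extL]
  · simp [extL]
  · simp [extL, extR, eqLiftLeft]
  · by_cases hab : a = b
    · subst hab
      simp [extL, extR, eqLiftLeft, eqLiftRight, toStar]
    · simp [extL, extR, eqLiftLeft, eqLiftRight, toStar, Ne.symm hab]

end EqLift

lemma starLift_eq_of_forall_mass_le {α : Type*} {ε δ : ℝ} {μ ν : α → ℝ≥0∞}
    (hμ : SubDist μ) (hν : SubDist ν)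
    (h : ∀ E, mass μ E ≤ ENNReal.ofReal (Real.exp ε) * mass ν E + ENNReal.ofReal δ) :
    StarLift ε δ μ ν (fun a b => a = b) := by
  classical
  set c := ENNReal.ofReal (Real.exp ε)
  refine ⟨eqLiftLeft c μ ν, eqLiftRight ν, hμ.of_tsum_right (tsum_eqLiftLeft c μ ν),
    hν.of_tsum_left (tsum_eqLiftRight ν), tsum_eqLiftLeft c μ ν, tsum_eqLiftRight ν,
    fun a b hne => ?_, fun a b hne => ?_, dpDiv_le_iff.2 fun X => ?_⟩
  · by_contra hab
    simp [eqLiftLeft, toStar, Ne.symm hab] at hne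
  · by_contra hab
    simp [eqLiftRight, hab] at hne
  · calc mass (extL (eqLiftLeft c μ ν)) X
        ≤ c * mass (extR (eqLiftRight ν)) X + ∑' p, extL (toStar fun a => μ a - c * ν a) p :=
          mass_le_mul_add_tsum (extL_eqLiftLeft_le c μ ν) X
      _ ≤ c * mass (extR (eqLiftRight ν)) X + ENNReal.ofReal δ := by
          rw [tsum_extL_toStar]
          gcongr
          exact tsum_tsub_mul_le ENNReal.ofReal_ne_top hν h

lemma starLift_eq_iff {α : Type*} {ε δ : ℝ} {μ ν : α → ℝ≥0∞} (hμ : SubDist μ) (hν : SubDist ν) :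
    StarLift ε δ μ ν (fun a b => a = b) ↔
      ∀ E, mass μ E ≤ ENNReal.ofReal (Real.exp ε) * mass ν E + ENNReal.ofReal δ := by
  refine ⟨fun ⟨_, _, hw⟩ E => ?_, starLift_eq_of_forall_mass_le hμ hν⟩
  simpa only [relImage_eq] using hw.mass_le E

theorem dp_iff_starLift_eq_general {A B : Type*}
    (P : A → B → ℝ≥0∞) (hP : ∀ a, SubDist (P a)) (φ : A → A → Prop)
    (ε δ : ℝ) :
    (∀ a₁ a₂, φ a₁ a₂ → ∀ E : Set B,
        mass (P a₁) E ≤ ENNReal.ofReal (Real.exp ε) * mass (P a₂) E + ENNReal.ofReal δ)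
    ↔ (∀ a₁ a₂, φ a₁ a₂ → StarLift ε δ (P a₁) (P a₂) (fun b₁ b₂ => b₁ = b₂)) := by
  simp only [starLift_eq_iff (hP _) (hP _)]

theorem dp_iff_starLift_eq {A B : Type*}
    (P : A → B → ℝ≥0∞) (hP : ∀ a, SubDist (P a)) (φ : A → A → Prop)
    (ε δ : ℝ) (hε : 0 ≤ ε) (hδ : 0 ≤ δ) :
    (∀ a₁ a₂, φ a₁ a₂ → ∀ E : Set B,
        mass (P a₁) E ≤ ENNReal.ofReal (Real.exp ε) * mass (P a₂) E + ENNReal.ofReal δ)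
    ↔ (∀ a₁ a₂, φ a₁ a₂ → StarLift ε δ (P a₁) (P a₂) (fun b₁ b₂ => b₁ = b₂)) :=
  dp_iff_starLift_eq_general P hP φ ε δ
end
end

section
/- (A counterexample for 2-liftings.) Let γ ∈ Dist(ℕ) be the geometric distribution γ(k) = 1/2^{k+1}, and R = {(x₁,x₂) ∈ ℕ × ℕ : x₁ + 1 = x₂}. Then for every ε, δ ≥ 0 with δ < 1/2, there is no (ε,δ)-approximate 2-lifting of γ with itself for R; in particular no pair μ_L, μ_R ∈ SubDist(ℕ × ℕ) exists with π₁(μ_L) = γ, π₂(μ_R) = γ, supp(μ_L), supp(μ_R) ⊆ R, and Δ_ε(μ_L,μ_R) ≤ δ. -/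
open scoped ENNReal

noncomputable section

/-- Witness conditions for an `(ε,δ)`-approximate 2-lifting. -/
def IsTwoWitness {A B : Type*} (ε δ : ℝ) (μ₁ : A → ℝ≥0∞) (μ₂ : B → ℝ≥0∞)
    (R : A → B → Prop) (μL μR : A × B → ℝ≥0∞) : Prop :=
  SubDist μL ∧ SubDist μR ∧
  (∀ a, (∑' b : B, μL (a, b)) = μ₁ a) ∧
  (∀ b, (∑' a : A, μR (a, b)) = μ₂ b) ∧
  (∀ a b, μL (a, b) ≠ 0 → R a b) ∧
  (∀ a b, μR (a, b) ≠ 0 → R a b) ∧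
  dpDiv ε μL μR ≤ ENNReal.ofReal δ

/-- Existence of an `(ε,δ)`-approximate 2-lifting. -/
def TwoLift {A B : Type*} (ε δ : ℝ) (μ₁ : A → ℝ≥0∞) (μ₂ : B → ℝ≥0∞)
    (R : A → B → Prop) : Prop :=
  ∃ μL μR, IsTwoWitness ε δ μ₁ μ₂ R μL μR

/-! The second marginal of `μ_R` must put mass `γ 0 = 1/2` on the column `x₂ = 0`, but no pair
`(x₁, 0)` lies in `R`, so the support condition forces that column to carry no mass at all. -/

theorem IsTwoWitness.snd_marginal_eq_zero {A B : Type*} {ε δ : ℝ} {μ₁ : A → ℝ≥0∞}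
    {μ₂ : B → ℝ≥0∞} {R : A → B → Prop} {μL μR : A × B → ℝ≥0∞}
    (h : IsTwoWitness ε δ μ₁ μ₂ R μL μR) {b : B} (hb : ∀ a, ¬ R a b) : μ₂ b = 0 := by
  obtain ⟨-, -, -, hmargR, -, hsuppR, -⟩ := h
  rw [← hmargR b]
  exact ENNReal.tsum_eq_zero.mpr fun a => by_contra fun hne => hb a (hsuppR a b hne)

theorem TwoLift.snd_eq_zero {A B : Type*} {ε δ : ℝ} {μ₁ : A → ℝ≥0∞} {μ₂ : B → ℝ≥0∞}
    {R : A → B → Prop} (h : TwoLift ε δ μ₁ μ₂ R) {b : B} (hb : ∀ a, ¬ R a b) : μ₂ b = 0 :=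
  let ⟨_, _, hw⟩ := h
  hw.snd_marginal_eq_zero hb

theorem geometric_no_twoLift_general (ε δ : ℝ) :
    ¬ TwoLift ε δ
      (fun k : ℕ => (1/2 : ℝ≥0∞) ^ (k + 1))
      (fun k : ℕ => (1/2 : ℝ≥0∞) ^ (k + 1))
      (fun x₁ x₂ => x₁ + 1 = x₂) := by
  intro h
  have hγ0 : (1/2 : ℝ≥0∞) ^ (0 + 1) = 0 := h.snd_eq_zero (b := 0) fun a => Nat.succ_ne_zero a
  norm_num at hγ0

theorem geometric_no_twoLift (ε δ : ℝ) (hε : 0 ≤ ε) (hδ0 : 0 ≤ δ) (hδ : δ < 1/2) :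
    ¬ TwoLift ε δ
      (fun k : ℕ => (1/2 : ℝ≥0∞) ^ (k + 1))
      (fun k : ℕ => (1/2 : ℝ≥0∞) ^ (k + 1))
      (fun x₁ x₂ => x₁ + 1 = x₂) :=
  geometric_no_twoLift_general ε δ
end
end
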